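/- Let k be a field of characteristic different from 2 and let t, s ∈ k satisfy t·s·γ₁·γ₂·γ₃·γ₄ ≠ 0, where γ₁ = 2s²−1, γ₂ = t−s, γ₃ = 2ts−1, γ₄ = 2t²−1. Consider the three diagonal quadratic forms in the six variables x_0,…,x_5: Q₁ = x_1² − 2t²x_2² + γ₄x_3² − 2γ₄x_0², Q₂ = t²s·x_2² − tsγ₂·x_3² − ts²·x_4² + γ₂·x_0², Q₃ = γ₁x_3² − 2s²x_4² + x_5² − 2γ₁x_0². Then every nonzero k-linear combination λ₁Q₁ + λ₂Q₂ + λ₃Q₃ has rank at least 4, i.e., at least four of its six diagonal coefficients are nonzero. (Equivalently, no quadric of rank at most three contains the Kummer surface 𝒳_{t,s}.) -/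

import Mathlib

/-!
The coefficient vector of `λ₁Q₁ + λ₂Q₂ + λ₃Q₃` is `M λ`, where the rows of the `6 × 3` matrix `M`
hold the `x_j²`-coefficients of `Q₁, Q₂, Q₃`. Each of the twenty `3 × 3` minors of `M` is, up to
sign, a monomial in `2, t, s, γ₁, …, γ₄`, so the six rows are in general position: a nonzero `λ`
is orthogonal to at most two of them, i.e. at most two coefficients of the combination vanish.
-/

/-- Diagonal coefficients (in the variables `x₀,…,x₅`) of the Klein quadric
`Q₁ = x₁² − 2t²x₂² + γ₄x₃² − 2γ₄x₀²`, where `γ₄ = 2t² − 1`. -/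
def kleinQ1 {k : Type*} [Field k] (t s : k) : Fin 6 → k :=
  ![-2 * (2 * t ^ 2 - 1), 1, -2 * t ^ 2, 2 * t ^ 2 - 1, 0, 0]

/-- Diagonal coefficients of the Klein quadric
`Q₂ = t²s·x₂² − tsγ₂·x₃² − ts²·x₄² + γ₂·x₀²`, where `γ₂ = t − s`. -/
def kleinQ2 {k : Type*} [Field k] (t s : k) : Fin 6 → k :=
  ![t - s, 0, t ^ 2 * s, -(t * s * (t - s)), -(t * s ^ 2), 0]

/-- Diagonal coefficients of the Klein quadric
`Q₃ = γ₁x₃² − 2s²x₄² + x₅² − 2γ₁x₀²`, where `γ₁ = 2s² − 1`. -/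
def kleinQ3 {k : Type*} [Field k] (t s : k) : Fin 6 → k :=
  ![-2 * (2 * s ^ 2 - 1), 0, 0, 2 * s ^ 2 - 1, -2 * s ^ 2, 1]

open Matrix

open Finset in
theorem Matrix.card_filter_mulVec_eq_zero_lt {ι k : Type*} [LinearOrder ι] [Fintype ι]
    [Field k] [DecidableEq k] {m : ℕ} (A : Matrix ι (Fin m) k)
    (hA : ∀ e : Fin m → ι, StrictMono e → (A.submatrix e id).det ≠ 0)
    {x : Fin m → k} (hx : x ≠ 0) : #{i | (A *ᵥ x) i = 0} < m := by
  by_contra! h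
  obtain ⟨S, hSZ, hS⟩ := Finset.exists_subset_card_eq h
  have hAx : A.submatrix (S.orderEmbOfFin hS) id *ᵥ x = 0 := by
    ext i
    exact (mem_filter.1 (hSZ (S.orderEmbOfFin_mem hS i))).2
  exact hx (eq_zero_of_mulVec_eq_zero (hA _ (S.orderEmbOfFin hS).strictMono) hAx)

section

variable {k : Type*} [Field k]

def kleinCoeffMatrix (t s : k) : Matrix (Fin 6) (Fin 3) k :=
  of fun j => ![kleinQ1 t s j, kleinQ2 t s j, kleinQ3 t s j]

theorem kleinCoeffMatrix_mulVec (t s l₁ l₂ l₃ : k) (j : Fin 6) :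
    (kleinCoeffMatrix t s *ᵥ ![l₁, l₂, l₃]) j =
      l₁ * kleinQ1 t s j + l₂ * kleinQ2 t s j + l₃ * kleinQ3 t s j := by
  simp only [mulVec, dotProduct, kleinCoeffMatrix, of_apply, Fin.sum_univ_three, cons_val_zero,
    cons_val_one, cons_val]
  ring

theorem kleinCoeffMatrix_det_submatrix_ne_zero (h2 : (2 : k) ≠ 0) (t s : k)
    (hts : t * s * (2 * s ^ 2 - 1) * (t - s) * (2 * t * s - 1) * (2 * t ^ 2 - 1) ≠ 0)
    (e : Fin 3 → Fin 6) (he : StrictMono e) :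
    ((kleinCoeffMatrix t s).submatrix e id).det ≠ 0 := by
  simp only [ne_eq, mul_eq_zero, not_or] at hts
  obtain ⟨⟨⟨⟨⟨ht, hs⟩, hγ₁⟩, hγ₂⟩, hγ₃⟩, hγ₄⟩ := hts
  have h01 : e 0 < e 1 := he (by decide)
  have h12 : e 1 < e 2 := he (by decide)
  rw [det_fin_three]
  simp only [submatrix_apply, id]
  generalize e 0 = a, e 1 = b, e 2 = c at *
  fin_cases a <;> fin_cases b <;> fin_cases c <;> simp only [Fin.mk_lt_mk] at h01 h12 <;> try omega
  all_goals simp only [kleinCoeffMatrix, kleinQ1, kleinQ2, kleinQ3, of_apply, Fin.reduceFinMk,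
    cons_val]
  -- one case per triple `e 0 < e 1 < e 2`, in lexicographic order
  · exact ne_of_eq_of_ne (b := -(2 * t ^ 2 * s * (2 * s ^ 2 - 1))) (by ring) (by simp [*])
  · exact ne_of_eq_of_ne (b := (2 * s ^ 2 - 1) * (t - s) * (2 * t * s - 1)) (by ring) (by simp [*])
  · exact ne_of_eq_of_ne (b := 2 * s ^ 3 * (2 * t * s - 1)) (by ring) (by simp [*])
  · exact ne_of_eq_of_ne (b := -(t - s)) (by ring) (neg_ne_zero.2 hγ₂)
  · exact ne_of_eq_of_ne (b := -(2 * t ^ 2 * (2 * s ^ 2 - 1) * (t - s) * (2 * t * s - 1)))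
      (by ring) (by simp [*])
  · exact ne_of_eq_of_ne (b := 2 ^ 3 * t ^ 3 * s ^ 3 * (t - s)) (by ring) (by simp [*])
  · exact ne_of_eq_of_ne (b := -(2 * t ^ 3 * (2 * t * s - 1))) (by ring) (by simp [*])
  · exact ne_of_eq_of_ne (b := -(2 * s ^ 2 * (t - s) * (2 * t * s - 1) * (2 * t ^ 2 - 1)))
      (by ring) (by simp [*])
  · exact ne_of_eq_of_ne (b := (t - s) * (2 * t * s - 1) * (2 * t ^ 2 - 1)) (by ring) (by simp [*])
  · exact ne_of_eq_of_ne (b := 2 * t * s ^ 2 * (2 * t ^ 2 - 1)) (by ring) (by simp [*])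
  · exact ne_of_eq_of_ne (b := t ^ 2 * s * (2 * s ^ 2 - 1)) (by ring) (by simp [*])
  · exact ne_of_eq_of_ne (b := -(2 * t ^ 2 * s ^ 3)) (by ring) (by simp [*])
  · exact ne_of_eq_of_ne (b := t ^ 2 * s) (by ring) (by simp [*])
  · exact ne_of_eq_of_ne (b := t * s ^ 2 * (2 * t * s - 1)) (by ring) (by simp [*])
  · exact ne_of_eq_of_ne (b := -(t * s * (t - s))) (by ring) (by simp [*])
  · exact ne_of_eq_of_ne (b := -(t * s ^ 2)) (by ring) (by simp [*])
  · exact ne_of_eq_of_ne (b := 2 * t ^ 2 * s ^ 2 * (t - s)) (by ring) (by simp [*])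
  · exact ne_of_eq_of_ne (b := -(t ^ 2 * s * (2 * t * s - 1))) (by ring) (by simp [*])
  · exact ne_of_eq_of_ne (b := 2 * t ^ 3 * s ^ 2) (by ring) (by simp [*])
  · exact ne_of_eq_of_ne (b := -(t * s ^ 2 * (2 * t ^ 2 - 1))) (by ring) (by simp [*])
end

open scoped Classical in
/-- No quadric of rank at most three contains the Kummer surface `𝒳_{t,s}`:
over a field of characteristic `≠ 2`, if `t·s·γ₁·γ₂·γ₃·γ₄ ≠ 0`, then every
nonzero linear combination `λ₁Q₁ + λ₂Q₂ + λ₃Q₃` of the three Klein quadrics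
has at least four nonzero diagonal coefficients. -/
theorem kummer_no_rank_three_quadric {k : Type*} [Field k] (h2 : (2 : k) ≠ 0)
    (t s : k)
    (hts : t * s * (2 * s ^ 2 - 1) * (t - s) * (2 * t * s - 1)
      * (2 * t ^ 2 - 1) ≠ 0) :
    ∀ l₁ l₂ l₃ : k, ¬ (l₁ = 0 ∧ l₂ = 0 ∧ l₃ = 0) →
      4 ≤ (Finset.univ.filter (fun j : Fin 6 =>
        l₁ * kleinQ1 t s j + l₂ * kleinQ2 t s j + l₃ * kleinQ3 t s j ≠ 0)).card := by
  intro l₁ l₂ l₃ hl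
  have hv : ![l₁, l₂, l₃] ≠ 0 := by
    contrapose! hl
    exact ⟨congrFun hl 0, congrFun hl 1, congrFun hl 2⟩
  have hzeros := (kleinCoeffMatrix t s).card_filter_mulVec_eq_zero_lt
    (kleinCoeffMatrix_det_submatrix_ne_zero h2 t s hts) hv
  simp only [kleinCoeffMatrix_mulVec] at hzeros
  have hsplit := Finset.card_filter_add_card_filter_not (s := Finset.univ)
    (fun j : Fin 6 => l₁ * kleinQ1 t s j + l₂ * kleinQ2 t s j + l₃ * kleinQ3 t s j ≠ 0)
  simp only [not_not, Finset.card_univ, Fintype.card_fin] at hsplit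
  omega
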